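/- Proposition 1 (subspace property of the optimal beamformer): for every power-feasible N-stream beamformer w = (w_1, …, w_N) (each w_n ∈ L²(μ; ℂ) and Σ_n ‖w_n‖²_{L²(μ)} ≤ P_max), the streamwise projection w∥ = (P_K w_1, …, P_K w_N) onto the closed linear span K of the conjugated channel sections is also power-feasible, each of its streams lies in K, and it achieves exactly the same spectral efficiency: SE(w∥) = SE(w), where SE(w) = log det(I_N + σ⁻² Q(w)). Consequently, the supremum of SE over all power-feasible beamformers equals the supremum of SE over power-feasible beamformers all of whose streams lie in K. -/

import Mathlib

/-!
Each entry of `Q(w)` only sees the streams through the received signals `e_{w_n}(r)`, and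
`e_w(r) = ⟪conj (h r ·), w⟫` is an inner product with a vector of `K` whenever the section
`h(r,·)` is square-integrable, which by Fubini holds for `ν`-almost every `r`. Since `P_K` is
self-adjoint and fixes `K`, replacing `w_n` by `P_K w_n` leaves every `e_{w_n}(r)`, hence `Q(w)`
and `SE(w)`, unchanged, while `P_K` does not increase norms. So projecting maps feasible
beamformers onto feasible beamformers with streams in `K` and the same spectral efficiency,
and the two suprema range over the same set of values.
-/

open MeasureTheory ComplexConjugate

noncomputable section

variable {α β : Type*} [MeasurableSpace α] [MeasurableSpace β]

/-- Effective received signal `e_w(r) = ∫_{S_B} h(r,s) w(s) dμ(s)`. -/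
def eSig (h : β → α → ℂ) (μ : Measure α) (w : Lp ℂ 2 μ) (r : β) : ℂ :=
  ∫ s, h r s * (w : α → ℂ) s ∂μ

/-- The closed linear span `K` of the conjugated channel sections
`{s ↦ conj (h r s) : r ∈ S_U, h(r,·) ∈ L²(μ)}` in `L²(μ; ℂ)`. -/
def chanSub (h : β → α → ℂ) (μ : Measure α) : Submodule ℂ (Lp ℂ 2 μ) :=
  (Submodule.span ℂ {f : Lp ℂ 2 μ |
    ∃ r : β, ∃ hr : MemLp (fun s => conj (h r s)) 2 μ,
      f = hr.toLp (fun s => conj (h r s))}).topologicalClosure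

instance (h : β → α → ℂ) (μ : Measure α) : CompleteSpace (chanSub h μ) :=
  (Submodule.isClosed_topologicalClosure _).completeSpace_coe

/-- The orthogonal projection `P_K` of `L²(μ; ℂ)` onto the channel subspace `K`. -/
def projK (h : β → α → ℂ) (μ : Measure α) (w : Lp ℂ 2 μ) : Lp ℂ 2 μ :=
  (Submodule.orthogonalProjectionOnto (chanSub h μ) w : Lp ℂ 2 μ)

/-- Signal covariance matrix `Q(w)_{mn} = ∫ conj(e_{w_m}(r)) ⬝ e_{w_n}(r) dν(r)`. -/
def covQ (h : β → α → ℂ) (μ : Measure α) (ν : Measure β) {N : ℕ}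
    (w : Fin N → Lp ℂ 2 μ) : Matrix (Fin N) (Fin N) ℂ :=
  Matrix.of fun m n => ∫ r, conj (eSig h μ (w m) r) * eSig h μ (w n) r ∂ν

/-- Spectral efficiency `SE(w) = log det(I_N + σ⁻² Q(w))`; since `Q(w)` is Hermitian
positive semidefinite, the determinant is a real number (`≥ 1`), so we take its real
part and apply `Real.log`. -/
def SE (h : β → α → ℂ) (μ : Measure α) (ν : Measure β) (σ2 : ℝ) {N : ℕ}
    (w : Fin N → Lp ℂ 2 μ) : ℝ :=
  Real.log ((1 + (σ2⁻¹ : ℂ) • covQ h μ ν w).det.re)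

end

variable {α β : Type*} [MeasurableSpace α]

section Projection

variable (h : β → α → ℂ) (μ : Measure α)

theorem conj_section_mem_chanSub {r : β} (hr : MemLp (fun s => conj (h r s)) 2 μ) :
    hr.toLp (fun s => conj (h r s)) ∈ chanSub h μ :=
  Submodule.le_topologicalClosure _ (Submodule.subset_span ⟨r, hr, rfl⟩)

theorem inner_conj_section_eq_eSig {r : β} (hr : MemLp (fun s => conj (h r s)) 2 μ)
    (v : Lp ℂ 2 μ) : inner ℂ (hr.toLp (fun s => conj (h r s))) v = eSig h μ v r := by
  rw [L2.inner_def]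
  refine integral_congr_ae ?_
  filter_upwards [hr.coeFn_toLp] with s hs
  simp [hs, RCLike.inner_apply, mul_comm]

theorem inner_projK_of_mem {g : Lp ℂ 2 μ} (hg : g ∈ chanSub h μ) (v : Lp ℂ 2 μ) :
    inner ℂ g (projK h μ v) = inner ℂ g v :=
  (chanSub h μ).inner_orthogonalProjectionOnto_eq_of_mem_left ⟨g, hg⟩ v

theorem projK_mem_chanSub (v : Lp ℂ 2 μ) : projK h μ v ∈ chanSub h μ :=
  ((chanSub h μ).orthogonalProjectionOnto v).2

theorem norm_projK_le (v : Lp ℂ 2 μ) : ‖projK h μ v‖ ≤ ‖v‖ :=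
  (chanSub h μ).norm_orthogonalProjectionOnto_apply_le v

theorem eSig_projK {r : β} (hr : MemLp (fun s => conj (h r s)) 2 μ) (v : Lp ℂ 2 μ) :
    eSig h μ (projK h μ v) r = eSig h μ v r := by
  rw [← inner_conj_section_eq_eSig h μ hr, ← inner_conj_section_eq_eSig h μ hr,
    inner_projK_of_mem h μ (conj_section_mem_chanSub h μ hr)]

theorem sum_norm_projK_sq_le {ι : Type*} (s : Finset ι) (w : ι → Lp ℂ 2 μ) :
    ∑ n ∈ s, ‖projK h μ (w n)‖ ^ 2 ≤ ∑ n ∈ s, ‖w n‖ ^ 2 :=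
  Finset.sum_le_sum fun n _ => pow_le_pow_left₀ (norm_nonneg _) (norm_projK_le h μ (w n)) 2

end Projection

variable [MeasurableSpace β]

theorem MeasureTheory.MemLp.ae_memLp_prodMk_left {E : Type*} [NormedAddCommGroup E]
    {μ : Measure α} {ν : Measure β} [SFinite μ] [SFinite ν] {p : ENNReal}
    (hp0 : p ≠ 0) (hp : p ≠ ⊤) {f : β × α → E} (hf : MemLp f p (ν.prod μ)) :
    ∀ᵐ r ∂ν, MemLp (fun s => f (r, s)) p μ := by
  have hint := (integrable_norm_rpow_iff hf.aestronglyMeasurable hp0 hp).mpr hf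
  filter_upwards [hint.prod_right_ae, hf.aestronglyMeasurable.prodMk_left] with r hr hmeas
  exact (integrable_norm_rpow_iff hmeas hp0 hp).mp hr

section Covariance

variable (h : β → α → ℂ) {μ : Measure α} (ν : Measure β) [SFinite μ] [SFinite ν]

theorem covQ_projK (hL2 : MemLp (Function.uncurry h) 2 (ν.prod μ)) {N : ℕ}
    (w : Fin N → Lp ℂ 2 μ) : covQ h μ ν (fun n => projK h μ (w n)) = covQ h μ ν w := by
  have hsections : ∀ᵐ r ∂ν, MemLp (fun s => conj (h r s)) 2 μ := by
    filter_upwards [hL2.ae_memLp_prodMk_left two_ne_zero ENNReal.ofNat_ne_top] with r hr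
    exact hr.star
  ext m n
  refine integral_congr_ae ?_
  filter_upwards [hsections] with r hr
  simp only [eSig_projK h μ hr]

theorem SE_projK (hL2 : MemLp (Function.uncurry h) 2 (ν.prod μ)) (σ2 : ℝ) {N : ℕ}
    (w : Fin N → Lp ℂ 2 μ) : SE h μ ν σ2 (fun n => projK h μ (w n)) = SE h μ ν σ2 w := by
  rw [SE, SE, covQ_projK h ν hL2]

end Covariance

theorem optimal_beamformer_subspace_property_general
    (μ : Measure α) (ν : Measure β) [SigmaFinite μ] [SigmaFinite ν]
    (h : β → α → ℂ)
    (hL2 : MemLp (Function.uncurry h) 2 (ν.prod μ))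
    (σ2 : ℝ) (Pmax : ℝ) (N : ℕ) :
    (∀ w : Fin N → Lp ℂ 2 μ, (∑ n, ‖w n‖ ^ 2 ≤ Pmax) →
      (∑ n, ‖projK h μ (w n)‖ ^ 2 ≤ Pmax) ∧
      (∀ n, projK h μ (w n) ∈ chanSub h μ) ∧
      SE h μ ν σ2 (fun n => projK h μ (w n)) = SE h μ ν σ2 w) ∧
    sSup {x : ℝ | ∃ w : Fin N → Lp ℂ 2 μ,
        (∑ n, ‖w n‖ ^ 2 ≤ Pmax) ∧ x = SE h μ ν σ2 w} =
      sSup {x : ℝ | ∃ w : Fin N → Lp ℂ 2 μ,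
        (∑ n, ‖w n‖ ^ 2 ≤ Pmax) ∧ (∀ n, w n ∈ chanSub h μ) ∧ x = SE h μ ν σ2 w} := by
  have projection_feasible : ∀ w : Fin N → Lp ℂ 2 μ, (∑ n, ‖w n‖ ^ 2 ≤ Pmax) →
      ∑ n, ‖projK h μ (w n)‖ ^ 2 ≤ Pmax := fun w hw =>
    (sum_norm_projK_sq_le h μ Finset.univ w).trans hw
  refine ⟨fun w hw => ⟨projection_feasible w hw, fun n => projK_mem_chanSub h μ (w n),
    SE_projK h ν hL2 σ2 w⟩, congrArg sSup (Set.ext fun x => ⟨?_, ?_⟩)⟩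
  · rintro ⟨w, hw, rfl⟩
    exact ⟨fun n => projK h μ (w n), projection_feasible w hw,
      fun n => projK_mem_chanSub h μ (w n), (SE_projK h ν hL2 σ2 w).symm⟩
  · rintro ⟨w, hw, -, rfl⟩
    exact ⟨w, hw, rfl⟩

/-- **Proposition 1, subspace property of the optimal beamformer.**
For every power-feasible `N`-stream beamformer `w` (each `w_n ∈ L²(μ; ℂ)` and
`Σ_n ‖w_n‖² ≤ P_max`), the streamwise projection `w∥ = (P_K w_1, …, P_K w_N)` onto the
closed linear span `K` of the conjugated channel sections is also power-feasible, each of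
its streams lies in `K`, and it achieves exactly the same spectral efficiency:
`SE(w∥) = SE(w)`. Consequently, the supremum of `SE` over all power-feasible beamformers
equals the supremum of `SE` over power-feasible beamformers all of whose streams lie
in `K`. -/
theorem optimal_beamformer_subspace_property
    (μ : Measure α) (ν : Measure β) [SigmaFinite μ] [SigmaFinite ν]
    (h : β → α → ℂ)
    (hmeas : Measurable (Function.uncurry h))
    (hL2 : MemLp (Function.uncurry h) 2 (ν.prod μ))
    (σ2 : ℝ) (hσ2 : 0 < σ2) (Pmax : ℝ) (hPmax : 0 < Pmax) (N : ℕ) :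
    (∀ w : Fin N → Lp ℂ 2 μ, (∑ n, ‖w n‖ ^ 2 ≤ Pmax) →
      (∑ n, ‖projK h μ (w n)‖ ^ 2 ≤ Pmax) ∧
      (∀ n, projK h μ (w n) ∈ chanSub h μ) ∧
      SE h μ ν σ2 (fun n => projK h μ (w n)) = SE h μ ν σ2 w) ∧
    sSup {x : ℝ | ∃ w : Fin N → Lp ℂ 2 μ,
        (∑ n, ‖w n‖ ^ 2 ≤ Pmax) ∧ x = SE h μ ν σ2 w} =
      sSup {x : ℝ | ∃ w : Fin N → Lp ℂ 2 μ,
        (∑ n, ‖w n‖ ^ 2 ≤ Pmax) ∧ (∀ n, w n ∈ chanSub h μ) ∧ x = SE h μ ν σ2 w} :=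
  optimal_beamformer_subspace_property_general μ ν h hL2 σ2 Pmax N
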